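/- arXiv:1111.1585 — 2 statements merged into one kernel-verified Lean document; each statement's English description precedes it below -/
import Mathlib

section
/- Let M be a monoid and c ∈ M. The set cM ∩ Mc equipped with the operation (mc) ∘ (cn) = mcn is a monoid with identity element c. -/
namespace LocalDivAux

variable {M : Type*} [Monoid M]

noncomputable def lmul (c : M) (x y : {x : M // (∃ m, x = c * m) ∧ (∃ n, x = n * c)}) :
    {x : M // (∃ m, x = c * m) ∧ (∃ n, x = n * c)} :=
  ⟨x.2.2.choose * y.1, by
    obtain ⟨a, ha⟩ := x.2.1
    obtain ⟨n, hn⟩ := y.2.1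
    obtain ⟨n', hn'⟩ := y.2.2
    have hm := x.2.2.choose_spec
    refine ⟨⟨a * n, ?_⟩, ⟨x.2.2.choose * n', ?_⟩⟩
    · rw [hn, ← mul_assoc, ← hm, ha, mul_assoc]
    · rw [hn', mul_assoc]⟩

lemma lmul_eq (c : M) (x y : {x : M // (∃ m, x = c * m) ∧ (∃ n, x = n * c)})
    (m n : M) (hx : x.1 = m * c) (hy : y.1 = c * n) :
    (lmul c x y).1 = m * c * n := by
  have hm := x.2.2.choose_spec
  show x.2.2.choose * y.1 = m * c * n
  rw [hy, ← mul_assoc, ← hm, hx]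

lemma lmul_eq_left (c : M) (x y : {x : M // (∃ m, x = c * m) ∧ (∃ n, x = n * c)})
    (m : M) (hx : x.1 = m * c) : (lmul c x y).1 = m * y.1 := by
  obtain ⟨n, hn⟩ := y.2.1
  rw [lmul_eq c x y m n hx hn, hn, mul_assoc]

lemma lmul_eq_right (c : M) (x y : {x : M // (∃ m, x = c * m) ∧ (∃ n, x = n * c)})
    (n : M) (hy : y.1 = c * n) : (lmul c x y).1 = x.1 * n := by
  obtain ⟨m, hm⟩ := x.2.2
  rw [lmul_eq c x y m n hm hy, ← hm]

noncomputable def lstr (c : M) : Monoid {x : M // (∃ m, x = c * m) ∧ (∃ n, x = n * c)} where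
  mul := lmul c
  one := ⟨c, ⟨1, (mul_one c).symm⟩, ⟨1, (one_mul c).symm⟩⟩
  one_mul x := Subtype.ext (by
    obtain ⟨n, hn⟩ := x.2.1
    show (lmul c _ x).1 = x.1
    rw [lmul_eq c _ x 1 n (one_mul c).symm hn, one_mul, ← hn])
  mul_one x := Subtype.ext (by
    obtain ⟨m, hm⟩ := x.2.2
    show (lmul c x _).1 = x.1
    rw [lmul_eq c x _ m 1 hm (mul_one c).symm, mul_one, ← hm])
  mul_assoc a b d := Subtype.ext (by
    obtain ⟨n, hn⟩ := d.2.1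
    obtain ⟨m, hm⟩ := a.2.2
    show (lmul c (lmul c a b) d).1 = (lmul c a (lmul c b d)).1
    rw [lmul_eq_right c _ d n hn, lmul_eq_left c a b m hm,
      lmul_eq_left c a _ m hm, lmul_eq_right c b d n hn, mul_assoc])

end LocalDivAux

/-- Let `M` be a monoid and `c ∈ M`. The set `cM ∩ Mc`
equipped with the operation `(mc) ∘ (cn) = mcn` is a monoid with identity
element `c`. -/
theorem local_divisor_is_monoid {M : Type*} [Monoid M] (c : M) :
    ∃ str : Monoid {x : M // (∃ m, x = c * m) ∧ (∃ n, x = n * c)},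
      (@One.one _ str.toOne).1 = c ∧
      ∀ (x y : {x : M // (∃ m, x = c * m) ∧ (∃ n, x = n * c)}) (m n : M),
        x.1 = m * c → y.1 = c * n →
        (@HMul.hMul _ _ _ (@instHMul _ str.toMul) x y).1 = m * c * n := by
  exact ⟨LocalDivAux.lstr c, rfl, fun x y m n hx hy => LocalDivAux.lmul_eq c x y m n hx hy⟩
end

section
/- If (X,M) strongly divides (X',M') and (Y,N) strongly divides (Y',N'), then the wreath product (X,M) ≀ (Y,N) strongly divides (X',M') ≀ (Y',N'). -/
/-- A transformation monoid `(X, M)`: a monoid `M` together with a right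
action of `M` on the set `X` (the action is not required to be faithful). -/
structure TM where
  /-- the state set -/
  X : Type
  /-- the monoid -/
  M : Type
  [str : Monoid M]
  /-- the right action of `M` on `X` -/
  act : X → M → X
  act_one : ∀ x, act x 1 = x
  act_mul : ∀ x m n, act x (m * n) = act (act x m) n

attribute [instance] TM.str

/-- A transformation monoid is faithful if distinct monoid elements act as
distinct transformations. -/
def TM.Faithful (T : TM) : Prop :=
  ∀ m m' : T.M, (∀ x, T.act x m = T.act x m') → m = m'

/-- The wreath product `(X,M) ≀ (Y,N)`: the monoid `M^Y ⋊ N` (with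
multiplication `(f,n)(g,k) = (f + (n*g), nk)`, where `(f + (n*g))(y) =
f(y)·g(y·n)`) acting on `X × Y` by `(x,y)·(f,n) = (x·(yf), y·n)`. -/
def TM.wr (S T : TM) : TM where
  X := S.X × T.X
  M := (T.X → S.M) × T.M
  str :=
    { mul := fun p q => (fun y => p.1 y * q.1 (T.act y p.2), p.2 * q.2)
      one := (fun _ => 1, 1)
      mul_assoc := by
        intro a b c
        refine Prod.ext ?_ (mul_assoc _ _ _)
        funext y
        show (a.1 y * b.1 (T.act y a.2)) * c.1 (T.act y (a.2 * b.2))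
            = a.1 y * (b.1 (T.act y a.2) * c.1 (T.act (T.act y a.2) b.2))
        rw [T.act_mul, mul_assoc]
      one_mul := by
        intro a
        refine Prod.ext ?_ (one_mul _)
        funext y
        show 1 * a.1 (T.act y 1) = a.1 y
        rw [T.act_one, one_mul]
      mul_one := by
        intro a
        refine Prod.ext ?_ (mul_one _)
        funext y
        show a.1 y * 1 = a.1 y
        exact mul_one _
      npow := @npowRec _ ⟨(fun _ => 1, 1)⟩
        ⟨fun p q => (fun y => p.1 y * q.1 (T.act y p.2), p.2 * q.2)⟩
      npow_zero := fun _ => rfl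
      npow_succ := by intros; rfl }
  act := fun xy fn => (S.act xy.1 (fn.1 xy.2), T.act xy.2 fn.2)
  act_one := by
    intro x
    refine Prod.ext (S.act_one _) (T.act_one _)
  act_mul := by
    intro x m n
    refine Prod.ext ?_ (T.act_mul _ _ _)
    exact (S.act_mul _ _ _).trans rfl

/-- `(X,M)` strongly divides `(Y,N)` via the surjection `φ : Y → X`:
there are a submonoid `N' ⊆ N` and a surjective homomorphism `ψ : N' → M`
with `φ(y·n) = φ(y)·ψ(n)`. -/
def TM.SDivVia (S T : TM) (φ : T.X → S.X) : Prop :=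
  Function.Surjective φ ∧
  ∃ (N' : Submonoid T.M) (ψ : N' →* S.M),
    Function.Surjective ψ ∧
    ∀ (y : T.X) (n : N'), φ (T.act y (n : T.M)) = S.act (φ y) (ψ n)

/-- Strong division of transformation monoids. -/
def TM.SDiv (S T : TM) : Prop :=
  ∃ φ : T.X → S.X, TM.SDivVia S T φ

/-!
A strong division is the same as a submonoid `G ≤ N × M` (the graph of `ψ`) that is the graph of
a function, projects onto `M`, and satisfies `φ(y·n) = φ(y)·m` for `(n, m) ∈ G`. For the wreath
products take the pairs `((f', n'), (f, n))` with `(n', n)` in the graph for `T` and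
`(f'(y'), f(φ₂ y'))` in the graph for `S` for every `y'`. Compatibility of `φ₂` with the actions
is exactly what makes this set closed under the twisted multiplication, and surjectivity of `φ₂`
is what makes it the graph of a function.
-/

section FunctionalGraph

variable {A B : Type*} [Monoid A] [Monoid B] (G : Submonoid (A × B))

abbrev Submonoid.graphDomain : Submonoid A :=
  MonoidHom.mrange ((MonoidHom.fst A B).comp G.subtype)

variable {G} (hG : ∀ p ∈ G, ∀ q ∈ G, p.1 = q.1 → p.2 = q.2)
include hG

noncomputable def Submonoid.graphEquiv : G ≃* G.graphDomain :=
  MulEquiv.ofBijective ((MonoidHom.fst A B).comp G.subtype).mrangeRestrict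
    ⟨fun p q hpq => Subtype.ext (Prod.ext (congrArg (·.1) hpq)
        (hG p p.2 q q.2 (congrArg (·.1) hpq))),
      MonoidHom.mrangeRestrict_surjective _⟩

noncomputable def Submonoid.graphHom : G.graphDomain →* B :=
  ((MonoidHom.snd A B).comp G.subtype).comp (Submonoid.graphEquiv hG).symm.toMonoidHom

theorem Submonoid.graphHom_apply {p : A × B} (hp : p ∈ G) :
    Submonoid.graphHom hG ⟨p.1, ⟨p, hp⟩, rfl⟩ = p.2 := by
  have : (Submonoid.graphEquiv hG).symm ⟨p.1, ⟨p, hp⟩, rfl⟩ = ⟨p, hp⟩ :=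
    (MulEquiv.symm_apply_eq _).2 rfl
  simp [Submonoid.graphHom, this]

theorem Submonoid.graphHom_surjective (hsurj : ∀ b, ∃ a, (a, b) ∈ G) :
    Function.Surjective (Submonoid.graphHom hG) := fun b =>
  let ⟨_, hab⟩ := hsurj b
  ⟨_, Submonoid.graphHom_apply hG hab⟩

end FunctionalGraph

namespace TM

/-- `G` is the graph of the homomorphism `ψ : N' → M` of a strong division along `φ`. -/
structure IsDivGraph (S T : TM) (φ : T.X → S.X) (G : Submonoid (T.M × S.M)) : Prop where
  functional : ∀ p ∈ G, ∀ q ∈ G, p.1 = q.1 → p.2 = q.2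
  surjective : ∀ m, ∃ n, (n, m) ∈ G
  act_compat : ∀ y, ∀ p ∈ G, φ (T.act y p.1) = S.act (φ y) p.2

theorem sdivVia_iff {S T : TM} {φ : T.X → S.X} :
    S.SDivVia T φ ↔ Function.Surjective φ ∧ ∃ G, S.IsDivGraph T φ G := by
  constructor
  · rintro ⟨hφ, N', ψ, hψ, hcompat⟩
    refine ⟨hφ, MonoidHom.mrange (N'.subtype.prod ψ), ⟨?_, fun m => ?_, ?_⟩⟩
    · rintro _ ⟨n, rfl⟩ _ ⟨n', rfl⟩ hnn'
      rw [Subtype.ext hnn']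
    · obtain ⟨n, rfl⟩ := hψ m
      exact ⟨n, ⟨n, rfl⟩⟩
    · rintro y _ ⟨n, rfl⟩
      exact hcompat y n
  · rintro ⟨hφ, G, hG⟩
    refine ⟨hφ, G.graphDomain, Submonoid.graphHom hG.functional,
      Submonoid.graphHom_surjective hG.functional hG.surjective, ?_⟩
    rintro y ⟨_, ⟨p, hp⟩, rfl⟩
    exact (hG.act_compat y p hp).trans
      (congrArg _ (Submonoid.graphHom_apply hG.functional hp).symm)

def wrGraph {S S' T T' : TM} (G₁ : Submonoid (S'.M × S.M)) (G₂ : Submonoid (T'.M × T.M))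
    (φ₂ : T'.X → T.X) (hφ₂ : ∀ y, ∀ p ∈ G₂, φ₂ (T'.act y p.1) = T.act (φ₂ y) p.2) :
    Submonoid ((S'.wr T').M × (S.wr T).M) where
  carrier := {pq | (pq.1.2, pq.2.2) ∈ G₂ ∧ ∀ y', (pq.1.1 y', pq.2.1 (φ₂ y')) ∈ G₁}
  one_mem' := ⟨G₂.one_mem, fun _ => G₁.one_mem⟩
  mul_mem' := by
    rintro ⟨p', p⟩ ⟨q', q⟩ ⟨hp₂, hp₁⟩ ⟨hq₂, hq₁⟩
    refine ⟨G₂.mul_mem hp₂ hq₂, fun y' => ?_⟩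
    have := G₁.mul_mem (hp₁ y') (hq₁ (T'.act y' p'.2))
    rwa [hφ₂ y' _ hp₂] at this

theorem IsDivGraph.wr {S S' T T' : TM} {φ₁ : S'.X → S.X} {φ₂ : T'.X → T.X}
    {G₁ : Submonoid (S'.M × S.M)} {G₂ : Submonoid (T'.M × T.M)}
    (h₁ : S.IsDivGraph S' φ₁ G₁) (h₂ : T.IsDivGraph T' φ₂ G₂) (hφ₂ : Function.Surjective φ₂) :
    (S.wr T).IsDivGraph (S'.wr T') (Prod.map φ₁ φ₂) (wrGraph G₁ G₂ φ₂ h₂.act_compat) where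
  functional := by
    rintro ⟨p', p⟩ ⟨hp₂, hp₁⟩ ⟨_, q⟩ ⟨hq₂, hq₁⟩ (rfl : p' = _)
    refine Prod.ext (funext fun y => ?_) (h₂.functional _ hp₂ _ hq₂ rfl)
    obtain ⟨y', rfl⟩ := hφ₂ y
    exact h₁.functional _ (hp₁ y') _ (hq₁ y') rfl
  surjective := by
    rintro ⟨f, n⟩
    obtain ⟨n', hn'⟩ := h₂.surjective n
    choose f' hf' using fun y' => h₁.surjective (f (φ₂ y'))
    exact ⟨(f', n'), hn', hf'⟩
  act_compat := by
    rintro ⟨x', y'⟩ ⟨p', p⟩ ⟨hp₂, hp₁⟩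
    exact Prod.ext (h₁.act_compat x' _ (hp₁ y')) (h₂.act_compat y' _ hp₂)

end TM

/-- If `(X,M)` strongly divides `(X',M')` and `(Y,N)`
strongly divides `(Y',N')`, then `(X,M) ≀ (Y,N)` strongly divides
`(X',M') ≀ (Y',N')`. -/
theorem sdiv_wreath_mono (S S' T T' : TM)
    (h1 : TM.SDiv S S') (h2 : TM.SDiv T T') :
    TM.SDiv (S.wr T) (S'.wr T') := by
  obtain ⟨φ₁, h1⟩ := h1
  obtain ⟨φ₂, h2⟩ := h2
  rw [TM.sdivVia_iff] at h1 h2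
  obtain ⟨hφ₁, G₁, hG₁⟩ := h1
  obtain ⟨hφ₂, G₂, hG₂⟩ := h2
  exact ⟨Prod.map φ₁ φ₂, TM.sdivVia_iff.2 ⟨hφ₁.prodMap hφ₂, _, hG₁.wr hG₂ hφ₂⟩⟩
end
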